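/- Let S be a 1-synchronizable system, τ ∈ Tr₀(S), and messages a, b₁,…,b_n with src(a) ≠ src(b_i) for all i, such that τ·!?a ∈ Tr₀(S) and τ·!?b₁⋯!?b_n ∈ Tr₀(S). Then τ·!?a·!?b₁⋯!?b_n ∈ Tr₀(S), τ·!?b₁⋯!?b_n·!?a ∈ Tr₀(S), and these two traces are S-equivalent. -/

import Mathlib

/-! Communicating finite state machines: messages, traces, systems. -/

structure MessageSet where
  msgs : Finset ℕ
  p : ℕ
  src : ℕ → ℕ
  dst : ℕ → ℕ

def MessageSet.WF (M : MessageSet) : Prop :=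
  1 ≤ M.p ∧ ∀ a ∈ M.msgs, M.src a ≠ M.dst a ∧ M.src a < M.p ∧ M.dst a < M.p

inductive Act where
  | send (a : ℕ)
  | recv (a : ℕ)
deriving DecidableEq

abbrev Trace := List Act

def Act.msg : Act → ℕ
  | .send a => a
  | .recv a => a

def peerOf (M : MessageSet) : Act → ℕ
  | .send a => M.src a
  | .recv a => M.dst a

/-- Send projection: the sequence of messages sent in a trace. -/
def sendProj (τ : Trace) : List ℕ :=
  τ.filterMap (fun α => match α with | .send a => some a | .recv _ => none)

/-- Projection of a trace on the actions of peer `i`. -/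
def projPeer (M : MessageSet) (i : ℕ) (τ : Trace) : Trace :=
  τ.filter (fun α => peerOf M α = i)

def sentOn (M : MessageSet) (i j : ℕ) (τ : Trace) : List ℕ :=
  τ.filterMap (fun α => match α with
    | .send a => if M.src a = i ∧ M.dst a = j then some a else none
    | .recv _ => none)

def recvOn (M : MessageSet) (i j : ℕ) (τ : Trace) : List ℕ :=
  τ.filterMap (fun α => match α with
    | .recv a => if M.src a = i ∧ M.dst a = j then some a else none
    | .send _ => none)

/-- A trace is FIFO if on every channel, in every prefix, the receives form a
prefix of the sends. -/
def Fifo (M : MessageSet) (τ : Trace) : Prop :=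
  ∀ τ', τ' <+: τ → ∀ i j, recvOn M i j τ' <+: sentOn M i j τ'

/-- `k`-bounded FIFO trace: the buffer of each channel never exceeds `k`. -/
def BoundedFifo (M : MessageSet) (k : ℕ) (τ : Trace) : Prop :=
  Fifo M τ ∧ ∀ τ', τ' <+: τ → ∀ i j,
    (sentOn M i j τ').length ≤ (recvOn M i j τ').length + k

/-- `!?a₁ ⬝ !?a₂ ⋯ !?aₙ` -/
def syncOf (l : List ℕ) : Trace := l.flatMap (fun a => [Act.send a, Act.recv a])

def Synchronous (τ : Trace) : Prop := ∃ l : List ℕ, τ = syncOf l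

def CausalEquiv (M : MessageSet) (τ₁ τ₂ : Trace) : Prop :=
  Fifo M τ₁ ∧ Fifo M τ₂ ∧ ∀ i, projPeer M i τ₁ = projPeer M i τ₂

/-- A system of communicating machines: for each peer `i`, an initial state and
a transition relation (all states are accepting). -/
structure System where
  init : ℕ → ℕ
  delta : ℕ → ℕ → Act → ℕ → Prop

/-- Well-formedness: peer `i` performs only actions of peer `i`, on messages of `M`. -/
def System.WF (S : System) (M : MessageSet) : Prop :=
  ∀ i q α q', S.delta i q α q' → peerOf M α = i ∧ α.msg ∈ M.msgs

/-- The machines are finite-state. -/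
def System.FiniteDelta (S : System) : Prop :=
  Set.Finite {x : ℕ × ℕ × Act × ℕ | S.delta x.1 x.2.1 x.2.2.1 x.2.2.2}

/-- A configuration: local states, and one FIFO buffer per channel `(i,j)`. -/
abbrev Config := (ℕ → ℕ) × (ℕ → ℕ → List ℕ)

def Stable (c : Config) : Prop := ∀ i j, c.2 i j = []

def Step (M : MessageSet) (S : System) (c : Config) : Act → Config → Prop
  | .send a, c' =>
      S.delta (M.src a) (c.1 (M.src a)) (.send a) (c'.1 (M.src a)) ∧
      (∀ k, k ≠ M.src a → c'.1 k = c.1 k) ∧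
      c'.2 (M.src a) (M.dst a) = c.2 (M.src a) (M.dst a) ++ [a] ∧
      (∀ k l, ¬(k = M.src a ∧ l = M.dst a) → c'.2 k l = c.2 k l)
  | .recv a, c' =>
      S.delta (M.dst a) (c.1 (M.dst a)) (.recv a) (c'.1 (M.dst a)) ∧
      (∀ k, k ≠ M.dst a → c'.1 k = c.1 k) ∧
      c.2 (M.src a) (M.dst a) = a :: c'.2 (M.src a) (M.dst a) ∧
      (∀ k l, ¬(k = M.src a ∧ l = M.dst a) → c'.2 k l = c.2 k l)

inductive Exec (M : MessageSet) (S : System) : Config → Trace → Config → Prop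
  | refl (c : Config) : Exec M S c [] c
  | step {c c' c'' : Config} {α : Act} {τ : Trace} :
      Step M S c α c' → Exec M S c' τ c'' → Exec M S c (α :: τ) c''

def initConfig (S : System) : Config := (S.init, fun _ _ => [])

def TraceOf (M : MessageSet) (S : System) (τ : Trace) : Prop :=
  ∃ c, Exec M S (initConfig S) τ c

/-- `Trk M S 0` = synchronous traces; `Trk M S k` (`k ≥ 1`) = `k`-bounded traces. -/
def Trk (M : MessageSet) (S : System) : ℕ → Trace → Prop
  | 0, τ => TraceOf M S τ ∧ Synchronous τ
  | (k+1), τ => TraceOf M S τ ∧ BoundedFifo M (k+1) τ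

def Trω (M : MessageSet) (S : System) (τ : Trace) : Prop := ∃ k, Trk M S k τ

/-- Two traces are `S`-equivalent if they lead from the initial configuration to
a common configuration. -/
def SEquiv (M : MessageSet) (S : System) (τ₁ τ₂ : Trace) : Prop :=
  ∃ c, Exec M S (initConfig S) τ₁ c ∧ Exec M S (initConfig S) τ₂ c

/-- Send-trace language. -/
def STw (M : MessageSet) (S : System) (T : Trace → Prop) : Set (List ℕ) :=
  {w | ∃ τ, T τ ∧ sendProj τ = w}

/-- Send traces enriched with the reached stable configurations. -/
def STc (M : MessageSet) (S : System) (T : Trace → Prop) :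
    Set (List ℕ ⊕ List ℕ × Config) :=
  {x | (∃ τ, T τ ∧ x = Sum.inl (sendProj τ)) ∨
       (∃ τ c, T τ ∧ Exec M S (initConfig S) τ c ∧ Stable c ∧
          x = Sum.inr (sendProj τ, c))}

def kSync (M : MessageSet) (S : System) (k : ℕ) : Prop :=
  STc M S (Trk M S 0) = STc M S (Trk M S k)

def Synchronizable (M : MessageSet) (S : System) : Prop :=
  STc M S (Trk M S 0) = STc M S (Trω M S)

def LangSync (M : MessageSet) (S : System) : Prop :=
  STw M S (Trk M S 0) = STw M S (Trω M S)

inductive Shuffle : List Act → List Act → List Act → Prop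
  | nil : Shuffle [] [] []
  | left {u v w : List Act} (a : Act) : Shuffle u v w → Shuffle (a :: u) v (a :: w)
  | right {u v w : List Act} (b : Act) : Shuffle u v w → Shuffle u (b :: v) (b :: w)

inductive NShuffle : List ℕ → List ℕ → List ℕ → Prop
  | nil : NShuffle [] [] []
  | left {u v w : List ℕ} (a : ℕ) : NShuffle u v w → NShuffle (a :: u) v (a :: w)
  | right {u v w : List ℕ} (b : ℕ) : NShuffle u v w → NShuffle u (b :: v) (b :: w)

inductive PPath (S : System) (i : ℕ) : ℕ → Trace → Prop
  | nil (q : ℕ) : PPath S i q []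
  | cons {q q' : ℕ} {α : Act} {w : Trace} :
      S.delta i q α q' → PPath S i q' w → PPath S i q (α :: w)

/-- The language of peer `i` (all states accepting). -/
def Lang (S : System) (i : ℕ) : Set Trace := {w | PPath S i (S.init i) w}

def prefCl (L : Set Trace) : Set Trace := {w | ∃ v ∈ L, w <+: v}

def OrientedRing (M : MessageSet) : Prop :=
  1 ≤ M.p ∧ ∀ i j, (∃ a ∈ M.msgs, M.src a = i ∧ M.dst a = j) ↔
    (i < M.p ∧ j = (i + 1) % M.p)

/-! ### Auxiliary machinery -/

section AuxMachinery

variable {M : MessageSet} {S : System}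

/-- Local path of peer `i` with recorded end state. -/
inductive PathTo (S : System) (i : ℕ) : ℕ → Trace → ℕ → Prop
  | refl (q : ℕ) : PathTo S i q [] q
  | step {q q' q'' : ℕ} {α : Act} {u : Trace} :
      S.delta i q α q' → PathTo S i q' u q'' → PathTo S i q (α :: u) q''

def pushB (M : MessageSet) (B : ℕ → ℕ → List ℕ) (a : ℕ) : ℕ → ℕ → List ℕ :=
  fun k l => if k = M.src a ∧ l = M.dst a then B k l ++ [a] else B k l

def popB (M : MessageSet) (B : ℕ → ℕ → List ℕ) (a : ℕ) (rest : List ℕ) :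
    ℕ → ℕ → List ℕ :=
  fun k l => if k = M.src a ∧ l = M.dst a then rest else B k l

def execBuf (M : MessageSet) : (ℕ → ℕ → List ℕ) → Trace → Option (ℕ → ℕ → List ℕ)
  | B, [] => some B
  | B, (Act.send a) :: u => execBuf M (pushB M B a) u
  | B, (Act.recv a) :: u =>
      match B (M.src a) (M.dst a) with
      | [] => none
      | x :: rest => if x = a then execBuf M (popB M B a rest) u else none

def emptyB : ℕ → ℕ → List ℕ := fun _ _ => []

/-! #### list projection lemmas -/

@[simp] lemma projPeer_nil (i : ℕ) : projPeer M i [] = [] := rfl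

lemma projPeer_cons (i : ℕ) (α : Act) (u : Trace) :
    projPeer M i (α :: u) = (if peerOf M α = i then [α] else []) ++ projPeer M i u := by
  by_cases h : peerOf M α = i <;> simp [projPeer, List.filter_cons, h]

@[simp] lemma projPeer_append (i : ℕ) (u v : Trace) :
    projPeer M i (u ++ v) = projPeer M i u ++ projPeer M i v := by
  simp [projPeer, List.filter_append]

@[simp] lemma syncOf_append (x y : List ℕ) : syncOf (x ++ y) = syncOf x ++ syncOf y := by
  simp [syncOf]

lemma syncOf_cons (b : ℕ) (x : List ℕ) :
    syncOf (b :: x) = Act.send b :: Act.recv b :: syncOf x := by simp [syncOf]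

@[simp] lemma syncOf_nil : syncOf ([] : List ℕ) = [] := rfl

@[simp] lemma sendProj_nil : sendProj [] = [] := rfl

@[simp] lemma sendProj_append (u v : Trace) :
    sendProj (u ++ v) = sendProj u ++ sendProj v := by
  simp [sendProj, List.filterMap_append]

@[simp] lemma sendProj_syncOf (x : List ℕ) : sendProj (syncOf x) = x := by
  induction x with
  | nil => rfl
  | cons b x ih => simp [syncOf_cons, sendProj, List.filterMap_cons] at ih ⊢; exact ih

/-- peer word of a single exchange -/
def pw (M : MessageSet) (i b : ℕ) : Trace :=
  (if M.src b = i then [Act.send b] else []) ++ (if M.dst b = i then [Act.recv b] else [])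

lemma projPeer_syncOf_cons (i b : ℕ) (x : List ℕ) :
    projPeer M i (syncOf (b :: x)) = pw M i b ++ projPeer M i (syncOf x) := by
  by_cases h1 : M.src b = i <;> by_cases h2 : M.dst b = i <;>
    simp [syncOf_cons, projPeer_cons, pw, peerOf, h1, h2]

lemma projPeer_syncOf_single (i b : ℕ) :
    projPeer M i (syncOf [b]) = pw M i b := by
  simpa using projPeer_syncOf_cons (M := M) i b []

end AuxMachinery
section AuxMachinery2

variable {M : MessageSet} {S : System}

lemma pathTo_nil {i q q'} (h : PathTo S i q [] q') : q = q' := by cases h; rfl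

lemma pathTo_cons {i q q'' α u} (h : PathTo S i q (α :: u) q'') :
    ∃ q', S.delta i q α q' ∧ PathTo S i q' u q'' := by
  cases h with | step hδ hp => exact ⟨_, hδ, hp⟩

lemma pathTo_split {i q q'' u v} (h : PathTo S i q (u ++ v) q'') :
    ∃ q', PathTo S i q u q' ∧ PathTo S i q' v q'' := by
  induction u generalizing q with
  | nil => exact ⟨q, PathTo.refl q, h⟩
  | cons α u ih =>
    obtain ⟨q₁, hδ, hp⟩ := pathTo_cons h
    obtain ⟨q', h1, h2⟩ := ih hp
    exact ⟨q', PathTo.step hδ h1, h2⟩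

lemma pathTo_prefix {i q q'' u v} (h : PathTo S i q (u ++ v) q'') :
    ∃ q', PathTo S i q u q' := ⟨(pathTo_split h).choose, (pathTo_split h).choose_spec.1⟩

/-- The product characterization of executions. -/
lemma exec_iff {c c' : Config} {u : Trace} :
    Exec M S c u c' ↔
      (∀ i, PathTo S i (c.1 i) (projPeer M i u) (c'.1 i)) ∧
      execBuf M c.2 u = some c'.2 := by
  constructor
  · intro h
    induction h with
    | refl c => exact ⟨fun i => by simpa using PathTo.refl _, rfl⟩
    | @step c c₁ c'' α u hst hex ih =>
      obtain ⟨ihp, ihb⟩ := ih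
      cases α with
      | send a =>
        obtain ⟨hδ, hstates, hbuf1, hbuf2⟩ := hst
        have hpush : pushB M c.2 a = c₁.2 := by
          funext k l
          by_cases hkl : k = M.src a ∧ l = M.dst a
          · obtain ⟨rfl, rfl⟩ := hkl; simp [pushB, hbuf1]
          · simp [pushB, hkl, (hbuf2 k l hkl).symm]
        refine ⟨fun i => ?_, ?_⟩
        · rw [projPeer_cons]
          by_cases hi : peerOf M (Act.send a) = i
          · simp only [hi, if_pos]
            simp only [peerOf] at hi
            subst hi
            exact PathTo.step hδ (ihp _)
          · simp only [hi, if_neg, not_false_iff, List.nil_append]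
            simp only [peerOf] at hi
            rw [← hstates i (fun h => hi h.symm)]
            exact ihp i
        · show execBuf M (pushB M c.2 a) u = some c''.2
          rw [hpush]; exact ihb
      | recv a =>
        obtain ⟨hδ, hstates, hbuf1, hbuf2⟩ := hst
        have hpop : popB M c.2 a (c₁.2 (M.src a) (M.dst a)) = c₁.2 := by
          funext k l
          by_cases hkl : k = M.src a ∧ l = M.dst a
          · obtain ⟨rfl, rfl⟩ := hkl; simp [popB]
          · simp [popB, hkl, (hbuf2 k l hkl).symm]
        refine ⟨fun i => ?_, ?_⟩
        · rw [projPeer_cons]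
          by_cases hi : peerOf M (Act.recv a) = i
          · simp only [hi, if_pos]
            simp only [peerOf] at hi
            subst hi
            exact PathTo.step hδ (ihp _)
          · simp only [hi, if_neg, not_false_iff, List.nil_append]
            simp only [peerOf] at hi
            rw [← hstates i (fun h => hi h.symm)]
            exact ihp i
        · show execBuf M c.2 (Act.recv a :: u) = some c''.2
          simpa [execBuf, hbuf1, hpop] using ihb
  · rintro ⟨hp, hb⟩
    induction u generalizing c with
    | nil =>
      have h1 : c.1 = c'.1 := funext fun i => pathTo_nil (by simpa using hp i)
      have h2 : c.2 = c'.2 := by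
        simpa [execBuf] using hb
      have : c = c' := Prod.ext h1 h2
      rw [this]; exact Exec.refl c'
    | cons α u ih =>
      cases α with
      | send a =>
        have hpa := hp (M.src a)
        rw [projPeer_cons] at hpa
        simp only [peerOf, if_pos rfl, List.singleton_append] at hpa
        obtain ⟨q₁, hδ, hrest⟩ := pathTo_cons hpa
        refine Exec.step (c' := (Function.update c.1 (M.src a) q₁, pushB M c.2 a))
          ?_ (ih ?_ ?_)
        · refine ⟨?_, ?_, ?_, ?_⟩
          · simpa [Function.update_self] using hδ
          · intro k hk; simp [Function.update_of_ne hk]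
          · simp [pushB]
          · intro k l hkl; simp [pushB, hkl]
        · intro i
          by_cases hi : i = M.src a
          · subst hi; simpa [Function.update_self] using hrest
          · have := hp i
            rw [projPeer_cons] at this
            simp only [peerOf] at this
            erw [if_neg (show ¬ (M.src a = i) from fun h => hi h.symm)] at this
            simpa [Function.update_of_ne hi] using this
        · exact hb
      | recv a =>
        have hpa := hp (M.dst a)
        rw [projPeer_cons] at hpa
        simp only [peerOf, if_pos rfl, List.singleton_append] at hpa
        obtain ⟨q₁, hδ, hrest⟩ := pathTo_cons hpa
        rcases hbd : c.2 (M.src a) (M.dst a) with _ | ⟨x, rest⟩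
        · exfalso; simp [execBuf, hbd] at hb
        · by_cases hx : x = a
          · subst hx
            have hb' : execBuf M (popB M c.2 x rest) u = some c'.2 := by
              simpa [execBuf, hbd] using hb
            refine Exec.step (c' := (Function.update c.1 (M.dst x) q₁, popB M c.2 x rest))
              ?_ (ih ?_ ?_)
            · refine ⟨?_, ?_, ?_, ?_⟩
              · simpa [Function.update_self] using hδ
              · intro k hk; simp [Function.update_of_ne hk]
              · simp [popB, hbd]
              · intro k l hkl; simp [popB, hkl]
            · intro i
              by_cases hi : i = M.dst x
              · subst hi; simpa [Function.update_self] using hrest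
              · have := hp i
                rw [projPeer_cons] at this
                simp only [peerOf] at this
                erw [if_neg (show ¬ (M.dst x = i) from fun h => hi h.symm)] at this
                simpa [Function.update_of_ne hi] using this
            · exact hb'
          · exfalso; simp [execBuf, hbd, hx] at hb

end AuxMachinery2
section AuxMachinery3

variable {M : MessageSet} {S : System}

lemma sentOn_cons_send (i j a : ℕ) (u : Trace) :
    sentOn M i j (Act.send a :: u) =
      (if M.src a = i ∧ M.dst a = j then [a] else []) ++ sentOn M i j u := by
  by_cases h : M.src a = i ∧ M.dst a = j <;> simp [sentOn, List.filterMap_cons, h]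

@[simp] lemma sentOn_cons_recv (i j a : ℕ) (u : Trace) :
    sentOn M i j (Act.recv a :: u) = sentOn M i j u := by
  simp [sentOn, List.filterMap_cons]

lemma recvOn_cons_recv (i j a : ℕ) (u : Trace) :
    recvOn M i j (Act.recv a :: u) =
      (if M.src a = i ∧ M.dst a = j then [a] else []) ++ recvOn M i j u := by
  by_cases h : M.src a = i ∧ M.dst a = j <;> simp [recvOn, List.filterMap_cons, h]

@[simp] lemma recvOn_cons_send (i j a : ℕ) (u : Trace) :
    recvOn M i j (Act.send a :: u) = recvOn M i j u := by
  simp [recvOn, List.filterMap_cons]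

@[simp] lemma sentOn_nil (i j : ℕ) : sentOn M i j [] = [] := rfl
@[simp] lemma recvOn_nil (i j : ℕ) : recvOn M i j [] = [] := rfl

lemma execBuf_conserve {B B' : ℕ → ℕ → List ℕ} {u : Trace}
    (h : execBuf M B u = some B') (i j : ℕ) :
    B i j ++ sentOn M i j u = recvOn M i j u ++ B' i j := by
  induction u generalizing B with
  | nil =>
    simp only [execBuf] at h
    obtain rfl : B = B' := by simpa using h
    simp
  | cons α u ih =>
    cases α with
    | send a =>
      have h' : execBuf M (pushB M B a) u = some B' := h
      have key := ih h'
      rw [sentOn_cons_send, recvOn_cons_send]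
      by_cases hc : M.src a = i ∧ M.dst a = j
      · have hp : pushB M B a i j = B i j ++ [a] := by
          simp [pushB, hc.1.symm, hc.2.symm]
        rw [hp] at key
        rw [if_pos hc]
        rw [← List.append_assoc]
        exact key
      · have hp : pushB M B a i j = B i j := by
          simp only [pushB, if_neg (fun hh : i = M.src a ∧ j = M.dst a =>
            hc ⟨hh.1.symm, hh.2.symm⟩)]
        rw [hp] at key
        rw [if_neg hc]
        simpa using key
    | recv a =>
      rcases hbd : B (M.src a) (M.dst a) with _ | ⟨x, rest⟩
      · exfalso; simp [execBuf, hbd] at h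
      · by_cases hx : x = a
        · subst hx
          have h' : execBuf M (popB M B x rest) u = some B' := by
            simpa [execBuf, hbd] using h
          have key := ih h'
          rw [sentOn_cons_recv, recvOn_cons_recv]
          by_cases hc : M.src x = i ∧ M.dst x = j
          · have hp : popB M B x rest i j = rest := by
              simp [popB, hc.1.symm, hc.2.symm]
            rw [hp] at key
            have hB : B i j = x :: rest := by rw [← hc.1, ← hc.2]; exact hbd
            rw [if_pos hc, hB]
            simpa using key
          · have hp : popB M B x rest i j = B i j := by
              simp only [popB, if_neg (fun hh : i = M.src x ∧ j = M.dst x =>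
                hc ⟨hh.1.symm, hh.2.symm⟩)]
            rw [hp] at key
            rw [if_neg hc]
            simpa using key
        · exfalso; simp [execBuf, hbd, hx] at h

lemma execBuf_append (B : ℕ → ℕ → List ℕ) (u v : Trace) :
    execBuf M B (u ++ v) = (execBuf M B u).bind (fun B' => execBuf M B' v) := by
  induction u generalizing B with
  | nil => simp [execBuf]
  | cons α u ih =>
    cases α with
    | send a => simpa [execBuf] using ih (pushB M B a)
    | recv a =>
      rcases hbd : B (M.src a) (M.dst a) with _ | ⟨x, rest⟩
      · simp [execBuf, hbd]
      · by_cases hx : x = a <;> simp [execBuf, hbd, hx, ih]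

def BSmall (B : ℕ → ℕ → List ℕ) : Prop := ∀ i j, (B i j).length ≤ 1

def SmallPref (M : MessageSet) (B : ℕ → ℕ → List ℕ) (u : Trace) : Prop :=
  ∀ v, v <+: u → ∃ B', execBuf M B v = some B' ∧ BSmall B'

lemma prefix_append_cases {v u w : Trace} (h : v <+: u ++ w) :
    v <+: u ∨ ∃ w', v = u ++ w' ∧ w' <+: w := by
  obtain ⟨t, ht⟩ := h
  rcases List.append_eq_append_iff.1 ht with ⟨a', ha1, _⟩ | ⟨c', hc1, hc2⟩
  · exact Or.inl ⟨a', ha1.symm⟩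
  · exact Or.inr ⟨c', hc1, ⟨t, hc2.symm⟩⟩

lemma smallPref_append {B B' : ℕ → ℕ → List ℕ} {u v : Trace}
    (hu : execBuf M B u = some B') (hsu : SmallPref M B u) (hsv : SmallPref M B' v) :
    SmallPref M B (u ++ v) := by
  intro x hx
  rcases prefix_append_cases hx with h | ⟨w', rfl, hw⟩
  · exact hsu x h
  · obtain ⟨B'', hB'', hs⟩ := hsv w' hw
    exact ⟨B'', by rw [execBuf_append, hu]; exact hB'', hs⟩

lemma smallPref_nil {B : ℕ → ℕ → List ℕ} (h : BSmall B) : SmallPref M B [] := by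
  intro v hv
  rw [List.prefix_nil.1 hv]
  exact ⟨B, rfl, h⟩

lemma smallPref_cons {B : ℕ → ℕ → List ℕ} {α : Act} {u : Trace} {B₁ : ℕ → ℕ → List ℕ}
    (hB : BSmall B) (hB₁ : BSmall B₁) (h1 : execBuf M B [α] = some B₁)
    (h2 : SmallPref M B₁ u) :
    SmallPref M B (α :: u) := by
  have : SmallPref M B ([α] ++ u) := by
    refine smallPref_append (M := M) h1 ?_ h2
    intro v hv
    rcases List.prefix_cons_iff.mp hv with rfl | ⟨v', rfl, hv'⟩
    · exact ⟨B, rfl, hB⟩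
    · rw [List.prefix_nil.1 hv']
      exact ⟨B₁, h1, hB₁⟩
  simpa using this

end AuxMachinery3
section AuxMachinery4

variable {M : MessageSet} {S : System}

lemma bsmall_emptyB : BSmall emptyB := fun _ _ => by simp [emptyB]

lemma bsmall_push {B : ℕ → ℕ → List ℕ} (hB : BSmall B) {a : ℕ}
    (h : B (M.src a) (M.dst a) = []) : BSmall (pushB M B a) := by
  intro i j
  by_cases hij : i = M.src a ∧ j = M.dst a
  · obtain ⟨rfl, rfl⟩ := hij; simp [pushB, h]
  · simpa [pushB, hij] using hB i j

lemma execBuf_sync {B : ℕ → ℕ → List ℕ} {x : List ℕ}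
    (hx : ∀ b ∈ x, B (M.src b) (M.dst b) = []) :
    execBuf M B (syncOf x) = some B ∧ (BSmall B → SmallPref M B (syncOf x)) := by
  induction x with
  | nil => exact ⟨rfl, fun h => smallPref_nil h⟩
  | cons b x ih =>
    have hb := hx b List.mem_cons_self
    have hpush : pushB M B b (M.src b) (M.dst b) = [b] := by simp [pushB, hb]
    have hpop : popB M (pushB M B b) b [] = B := by
      funext k l
      by_cases hkl : k = M.src b ∧ l = M.dst b
      · obtain ⟨rfl, rfl⟩ := hkl; simp [popB, hb]
      · simp [popB, pushB, hkl]
    have hrecv : execBuf M (pushB M B b) [Act.recv b] = some B := by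
      simp [execBuf, hpush, hpop]
    obtain ⟨ihv, ihs⟩ := ih (fun b' hb' => hx b' (List.mem_cons_of_mem b hb'))
    have h2 : execBuf M B (syncOf (b :: x)) = execBuf M B (syncOf x) := by
      simp only [syncOf_cons, execBuf, hpush, hpop]
      simp [syncOf, List.flatMap]
    refine ⟨by rw [h2]; exact ihv, fun hB => ?_⟩
    have hBp : BSmall (pushB M B b) := bsmall_push hB hb
    rw [syncOf_cons]
    refine smallPref_cons hB hBp rfl ?_
    exact smallPref_cons hBp hB hrecv (ihs hB)

lemma boundedFifo_of_smallPref {u : Trace} (h : SmallPref M emptyB u) :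
    BoundedFifo M 1 u := by
  constructor
  · intro v hv i j
    obtain ⟨B', hB', _⟩ := h v hv
    have hc := execBuf_conserve hB' i j
    simp only [emptyB, List.nil_append] at hc
    exact ⟨B' i j, hc.symm⟩
  · intro v hv i j
    obtain ⟨B', hB', hs⟩ := h v hv
    have hc := execBuf_conserve hB' i j
    simp only [emptyB, List.nil_append] at hc
    have := congrArg List.length hc
    simp only [List.length_append] at this
    have := hs i j
    omega

lemma trk1_of (h1 : TraceOf M S u) (h2 : BoundedFifo M 1 u) : Trk M S 1 u := ⟨h1, h2⟩

lemma sync_eq_syncOf {u : Trace} (h : Synchronous u) : u = syncOf (sendProj u) := by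
  obtain ⟨x, rfl⟩ := h; rw [sendProj_syncOf]

lemma kSync_inl (hsync : kSync M S 1) {u : Trace}
    (h1 : TraceOf M S u) (h2 : BoundedFifo M 1 u) :
    TraceOf M S (syncOf (sendProj u)) := by
  have hm : Sum.inl (sendProj u) ∈ STc M S (Trk M S 1) :=
    Or.inl ⟨u, ⟨h1, h2⟩, rfl⟩
  rw [← hsync] at hm
  rcases hm with ⟨τ'', hτ'', heq⟩ | ⟨τ'', c, _, _, _, heq⟩
  · have hsp : sendProj u = sendProj τ'' := by
      simpa using congrArg (fun x => Sum.elim id (fun _ => ([] : List ℕ)) x) heq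
    rw [hsp, ← sync_eq_syncOf hτ''.2]
    exact hτ''.1
  · cases heq

lemma kSync_inr (hsync : kSync M S 1) {u : Trace} {c : Config}
    (hex : Exec M S (initConfig S) u c) (h2 : BoundedFifo M 1 u) (hst : Stable c) :
    Exec M S (initConfig S) (syncOf (sendProj u)) c := by
  have hm : Sum.inr ((sendProj u, c) : List ℕ × Config) ∈ STc M S (Trk M S 1) :=
    Or.inr ⟨u, c, ⟨⟨c, hex⟩, h2⟩, hex, hst, rfl⟩
  rw [← hsync] at hm
  rcases hm with ⟨τ'', _, heq⟩ | ⟨τ'', c'', hτ'', hex'', _, heq⟩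
  · cases heq
  · have h1 : sendProj u = sendProj τ'' ∧ c = c'' := by
      have := heq
      injection this with h
      exact ⟨congrArg Prod.fst h, congrArg Prod.snd h⟩
    obtain ⟨hsp, rfl⟩ := h1
    rw [hsp, ← sync_eq_syncOf hτ''.2]
    exact hex''

end AuxMachinery4
section AuxWitness

variable {M : MessageSet} {S : System}

lemma word_U (i : ℕ) (x y : List ℕ) (a : ℕ) :
    projPeer M i (syncOf (x ++ [a] ++ y)) =
      projPeer M i (syncOf x) ++ pw M i a ++ projPeer M i (syncOf y) := by
  rw [show x ++ [a] ++ y = x ++ (a :: y) by simp, syncOf_append, projPeer_append,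
    projPeer_syncOf_cons]
  simp

@[simp] lemma pushB_apply (B : ℕ → ℕ → List ℕ) (a k l : ℕ) :
    pushB M B a k l = if k = M.src a ∧ l = M.dst a then B k l ++ [a] else B k l := rfl

@[simp] lemma sendProj_cons_send (a : ℕ) (u : Trace) :
    sendProj (Act.send a :: u) = a :: sendProj u := by
  simp [sendProj, List.filterMap_cons]

@[simp] lemma sendProj_cons_recv (a : ℕ) (u : Trace) :
    sendProj (Act.recv a :: u) = sendProj u := by
  simp [sendProj, List.filterMap_cons]

lemma execBuf_send_eq (B : ℕ → ℕ → List ℕ) (a : ℕ) :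
    execBuf M B [Act.send a] = some (pushB M B a) := rfl

lemma execBuf_recv_eq (B : ℕ → ℕ → List ℕ) (a : ℕ) (rest : List ℕ)
    (h : B (M.src a) (M.dst a) = a :: rest) :
    execBuf M B [Act.recv a] = some (popB M B a rest) := by simp [execBuf, h]

/-- Step for getting `τ·!?a·syncOf m·!?c ∈ Tr` from `τ·!?a·syncOf m` and `τ·syncOf l`. -/
lemma step_T (hsync : kSync M S 1) {w m rest : List ℕ} {a c : ℕ}
    (hpq : M.src a ≠ M.dst a)
    (hpc : M.src a ≠ M.src c)
    (hpm : ∀ b ∈ m, M.src a ≠ M.src b)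
    (hT : TraceOf M S (syncOf (w ++ [a] ++ m)))
    (hH2 : TraceOf M S (syncOf (w ++ (m ++ c :: rest)))) :
    TraceOf M S (syncOf (w ++ [a] ++ (m ++ [c]))) := by
  classical
  obtain ⟨cT, hexT⟩ := hT
  obtain ⟨pathsT, -⟩ := exec_iff.1 hexT
  obtain ⟨cH, hexH⟩ := hH2
  obtain ⟨pathsH, -⟩ := exec_iff.1 hexH
  set W : Trace := syncOf w ++ ([Act.send a] ++ (syncOf m ++ [Act.send c])) with hW
  -- peer words
  have hwords : ∀ i, ∃ st, PathTo S i (S.init i) (projPeer M i W) st := by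
    intro i
    by_cases hip : M.src a = i
    · -- word equals the word of syncOf (w ++ [a] ++ m)
      have hq : ¬ (M.dst a = i) := fun h => hpq (hip.trans h.symm)
      have hc : ¬ (M.src c = i) := fun h => hpc (hip.trans h.symm)
      have heq : projPeer M i W = projPeer M i (syncOf (w ++ [a] ++ m)) := by
        rw [word_U]
        simp [hW, projPeer_cons, peerOf, pw, hip, hq, hc]
      rw [heq]; exact ⟨_, pathsT i⟩
    · -- word is a prefix of the word of syncOf (w ++ (m ++ c :: rest))
      have hH : projPeer M i (syncOf (w ++ (m ++ c :: rest))) =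
          (projPeer M i (syncOf w) ++ projPeer M i (syncOf m) ++
            (if M.src c = i then [Act.send c] else [])) ++
          ((if M.dst c = i then [Act.recv c] else []) ++ projPeer M i (syncOf rest)) := by
        rw [show w ++ (m ++ c :: rest) = (w ++ m) ++ [c] ++ rest by simp]
        rw [word_U]
        simp [pw]
      have heq : projPeer M i W =
          projPeer M i (syncOf w) ++ projPeer M i (syncOf m) ++
            (if M.src c = i then [Act.send c] else []) := by
        simp [hW, projPeer_cons, peerOf, hip]
        rfl
      rw [heq]
      have := pathsH i
      rw [hH] at this
      exact pathTo_prefix this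
  choose st hst using hwords
  -- buffers
  have hBa : ∀ b, M.src a ≠ M.src b → pushB M emptyB a (M.src b) (M.dst b) = [] := by
    intro b hb
    have : ¬ (M.src b = M.src a) := fun h => hb h.symm
    simp [pushB, emptyB, this]
  set Ba : ℕ → ℕ → List ℕ := pushB M emptyB a with hBadef
  have hBsw := execBuf_sync (M := M) (B := emptyB) (x := w) (fun b _ => rfl)
  have hBa_small : BSmall Ba := bsmall_push bsmall_emptyB rfl
  have hBm := execBuf_sync (M := M) (B := Ba) (x := m) (fun b hb => hBa b (hpm b hb))
  have hBc_small : BSmall (pushB M Ba c) := bsmall_push hBa_small (hBa c hpc)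
  have hrun : execBuf M emptyB W = some (pushB M Ba c) := by
    rw [hW, execBuf_append, hBsw.1, Option.bind_some]
    show execBuf M Ba (syncOf m ++ [Act.send c]) = _
    rw [execBuf_append, hBm.1, Option.bind_some, execBuf_send_eq]
  have hsp : SmallPref M emptyB W := by
    rw [hW]
    refine smallPref_append hBsw.1 (hBsw.2 bsmall_emptyB) ?_
    rw [List.singleton_append]
    refine smallPref_cons bsmall_emptyB hBa_small rfl ?_
    refine smallPref_append hBm.1 (hBm.2 hBa_small) ?_
    exact smallPref_cons hBa_small hBc_small rfl (smallPref_nil hBc_small)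
  have hexW : Exec M S (initConfig S) W (st, pushB M Ba c) :=
    exec_iff.2 ⟨hst, hrun⟩
  have hres := kSync_inl hsync ⟨_, hexW⟩ (boundedFifo_of_smallPref hsp)
  have hsp' : sendProj W = w ++ [a] ++ (m ++ [c]) := by
    simp [hW]
  rw [hsp'] at hres
  exact hres

end AuxWitness
section AuxWitness2

variable {M : MessageSet} {S : System}

/-- Membership step: from `U_k = syncOf (w ++ m ++ [a] ++ c :: rest)` and the
pure trace `syncOf (w ++ (m ++ c :: rest))` obtain `U_{k+1}`. -/
lemma step_mem (hsync : kSync M S 1) {w m rest : List ℕ} {a c : ℕ}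
    (hpq : M.src a ≠ M.dst a)
    (hpc : M.src a ≠ M.src c)
    (hprest : ∀ b ∈ rest, M.src a ≠ M.src b)
    (hU : TraceOf M S (syncOf (w ++ m ++ [a] ++ c :: rest)))
    (hH2 : TraceOf M S (syncOf (w ++ (m ++ c :: rest)))) :
    TraceOf M S (syncOf (w ++ (m ++ [c]) ++ [a] ++ rest)) := by
  classical
  obtain ⟨cT, hexT⟩ := hU
  obtain ⟨pathsT, -⟩ := exec_iff.1 hexT
  obtain ⟨cH, hexH⟩ := hH2
  obtain ⟨pathsH, -⟩ := exec_iff.1 hexH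
  set W : Trace := syncOf (w ++ m) ++
      (Act.send c :: Act.send a :: Act.recv c :: syncOf rest) with hW
  have hwords : ∀ i, ∃ st, PathTo S i (S.init i) (projPeer M i W) st := by
    intro i
    by_cases hip : M.src a = i
    · have hq : ¬ (M.dst a = i) := fun h => hpq (hip.trans h.symm)
      have hc : ¬ (M.src c = i) := fun h => hpc (hip.trans h.symm)
      have heq : projPeer M i W = projPeer M i (syncOf (w ++ m ++ [a] ++ c :: rest)) := by
        rw [word_U, projPeer_syncOf_cons]
        simp [hW, projPeer_cons, peerOf, pw, hip, hq, hc]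
        rfl
      rw [heq]; exact ⟨_, pathsT i⟩
    · have heq : projPeer M i W = projPeer M i (syncOf (w ++ (m ++ c :: rest))) := by
        rw [show w ++ (m ++ c :: rest) = (w ++ m) ++ [c] ++ rest by simp, word_U]
        simp [hW, projPeer_cons, peerOf, pw, hip]
        rfl
      rw [heq]; exact ⟨_, pathsH i⟩
  choose st hst using hwords
  set Ba : ℕ → ℕ → List ℕ := pushB M emptyB a with hBadef
  set Bc : ℕ → ℕ → List ℕ := pushB M emptyB c with hBcdef
  have hBa : ∀ b, M.src a ≠ M.src b → Ba (M.src b) (M.dst b) = [] := by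
    intro b hb
    have : ¬ (M.src b = M.src a) := fun h => hb h.symm
    simp [hBadef, pushB, emptyB, this]
  have hchc : ¬ (M.src a = M.src c ∧ M.dst a = M.dst c) := fun h => hpc h.1
  have hchc' : ¬ (M.src c = M.src a ∧ M.dst c = M.dst a) := fun h => hpc h.1.symm
  have hBsw := execBuf_sync (M := M) (B := emptyB) (x := w ++ m) (fun b _ => rfl)
  have hBc_small : BSmall Bc := bsmall_push bsmall_emptyB rfl
  have hBca_small : BSmall (pushB M Bc a) := by
    refine bsmall_push hBc_small ?_
    simp [hBcdef, pushB, emptyB, hchc]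
  have hBa_small : BSmall Ba := bsmall_push bsmall_emptyB rfl
  have hvalc : (pushB M Bc a) (M.src c) (M.dst c) = c :: [] := by
    simp [hBcdef, pushB, emptyB, hchc']
  have hpop : popB M (pushB M Bc a) c [] = Ba := by
    funext k l
    by_cases hkl : k = M.src c ∧ l = M.dst c
    · obtain ⟨rfl, rfl⟩ := hkl
      simp [popB, hBadef, pushB, emptyB, hchc']
    · by_cases hka : k = M.src a ∧ l = M.dst a
      · obtain ⟨rfl, rfl⟩ := hka
        simp [popB, hkl, hBadef, hBcdef, pushB, emptyB, hchc]
      · simp [popB, hkl, hka, hBadef, hBcdef, pushB, emptyB]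
  have hrecvc : execBuf M (pushB M Bc a) [Act.recv c] = some Ba := by
    rw [execBuf_recv_eq _ _ _ hvalc, hpop]
  have hBrest := execBuf_sync (M := M) (B := Ba) (x := rest)
    (fun b hb => hBa b (hprest b hb))
  have hrun : execBuf M emptyB W = some Ba := by
    rw [hW, execBuf_append, hBsw.1, Option.bind_some]
    show execBuf M (pushB M Bc a) (Act.recv c :: syncOf rest) = _
    rw [show (Act.recv c :: syncOf rest : Trace) = [Act.recv c] ++ syncOf rest from rfl,
      execBuf_append, hrecvc, Option.bind_some, hBrest.1]
  have hsp : SmallPref M emptyB W := by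
    rw [hW]
    refine smallPref_append hBsw.1 (hBsw.2 bsmall_emptyB) ?_
    refine smallPref_cons bsmall_emptyB hBc_small rfl ?_
    refine smallPref_cons hBc_small hBca_small rfl ?_
    exact smallPref_cons hBca_small hBa_small hrecvc (hBrest.2 hBa_small)
  have hexW : Exec M S (initConfig S) W (st, Ba) := exec_iff.2 ⟨hst, hrun⟩
  have hres := kSync_inl hsync ⟨_, hexW⟩ (boundedFifo_of_smallPref hsp)
  have hsp' : sendProj W = w ++ (m ++ [c]) ++ [a] ++ rest := by simp [hW]
  rw [hsp'] at hres
  exact hres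

end AuxWitness2
section AuxWitness3

variable {M : MessageSet} {S : System}

/-- p-chain step: the endpoint `x` of the `src a`-word of `U_k` is also an
endpoint of the `src a`-word of `U_{k+1}`. -/
lemma step_p (hsync : kSync M S 1) {w m rest : List ℕ} {a c : ℕ} {x : ℕ}
    (hpq : M.src a ≠ M.dst a)
    (hpc : M.src a ≠ M.src c)
    (hx : PathTo S (M.src a) (S.init (M.src a))
      (projPeer M (M.src a) (syncOf (w ++ m ++ [a] ++ c :: rest))) x)
    (hU1 : TraceOf M S (syncOf (w ++ (m ++ [c]) ++ [a] ++ rest))) :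
    PathTo S (M.src a) (S.init (M.src a))
      (projPeer M (M.src a) (syncOf (w ++ (m ++ [c]) ++ [a] ++ rest))) x := by
  classical
  obtain ⟨cU, hexU⟩ := hU1
  obtain ⟨pathsU, -⟩ := exec_iff.1 hexU
  set W : Trace := syncOf (w ++ m) ++
      (Act.send c :: Act.send a :: Act.recv c :: Act.recv a :: syncOf rest) with hW
  have hwordp : projPeer M (M.src a) W =
      projPeer M (M.src a) (syncOf (w ++ m ++ [a] ++ c :: rest)) := by
    have hq : ¬ (M.dst a = M.src a) := fun h => hpq h.symm
    have hc : ¬ (M.src c = M.src a) := fun h => hpc h.symm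
    rw [word_U, projPeer_syncOf_cons]
    simp [hW, projPeer_cons, peerOf, pw, hq, hc]
    rfl
  have hwordo : ∀ i, M.src a ≠ i → projPeer M i W =
      projPeer M i (syncOf (w ++ (m ++ [c]) ++ [a] ++ rest)) := by
    intro i hip
    have hip' : ¬ (M.src a = i) := hip
    rw [word_U]
    simp [hW, projPeer_cons, peerOf, pw, hip', projPeer_syncOf_single]
    rfl
  have hwords : ∀ i, PathTo S i (S.init i) (projPeer M i W)
      (if M.src a = i then x else cU.1 i) := by
    intro i
    by_cases hip : M.src a = i
    · subst hip
      rw [if_pos rfl, hwordp]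
      exact hx
    · rw [if_neg hip, hwordo i hip]
      exact pathsU i
  -- buffers
  set Ba : ℕ → ℕ → List ℕ := pushB M emptyB a with hBadef
  set Bc : ℕ → ℕ → List ℕ := pushB M emptyB c with hBcdef
  have hchc : ¬ (M.src a = M.src c ∧ M.dst a = M.dst c) := fun h => hpc h.1
  have hchc' : ¬ (M.src c = M.src a ∧ M.dst c = M.dst a) := fun h => hpc h.1.symm
  have hBsw := execBuf_sync (M := M) (B := emptyB) (x := w ++ m) (fun b _ => rfl)
  have hBc_small : BSmall Bc := bsmall_push bsmall_emptyB rfl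
  have hBa_small : BSmall Ba := bsmall_push bsmall_emptyB rfl
  have hBca_small : BSmall (pushB M Bc a) := by
    refine bsmall_push hBc_small ?_
    simp [hBcdef, pushB, emptyB, hchc]
  have hvalc : (pushB M Bc a) (M.src c) (M.dst c) = c :: [] := by
    simp [hBcdef, pushB, emptyB, hchc']
  have hpop : popB M (pushB M Bc a) c [] = Ba := by
    funext k l
    by_cases hkl : k = M.src c ∧ l = M.dst c
    · obtain ⟨rfl, rfl⟩ := hkl
      simp [popB, hBadef, pushB, emptyB, hchc']
    · by_cases hka : k = M.src a ∧ l = M.dst a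
      · obtain ⟨rfl, rfl⟩ := hka
        simp [popB, hkl, hBadef, hBcdef, pushB, emptyB, hchc]
      · simp [popB, hkl, hka, hBadef, hBcdef, pushB, emptyB]
  have hrecvc : execBuf M (pushB M Bc a) [Act.recv c] = some Ba := by
    rw [execBuf_recv_eq _ _ _ hvalc, hpop]
  have hvala : Ba (M.src a) (M.dst a) = a :: [] := by
    simp [hBadef, pushB, emptyB]
  have hpopa : popB M Ba a [] = emptyB := by
    funext k l
    by_cases hka : k = M.src a ∧ l = M.dst a
    · obtain ⟨rfl, rfl⟩ := hka; simp [popB, emptyB]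
    · simp [popB, hka, hBadef, pushB, emptyB]
  have hrecva : execBuf M Ba [Act.recv a] = some emptyB := by
    rw [execBuf_recv_eq _ _ _ hvala, hpopa]
  have hBrest := execBuf_sync (M := M) (B := emptyB) (x := rest) (fun b _ => rfl)
  have hrun : execBuf M emptyB W = some emptyB := by
    rw [hW, execBuf_append, hBsw.1, Option.bind_some]
    show execBuf M (pushB M Bc a) (Act.recv c :: Act.recv a :: syncOf rest) = _
    rw [show (Act.recv c :: Act.recv a :: syncOf rest : Trace) =
        [Act.recv c] ++ ([Act.recv a] ++ syncOf rest) from rfl,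
      execBuf_append, hrecvc, Option.bind_some, execBuf_append, hrecva,
      Option.bind_some, hBrest.1]
  have hsp : SmallPref M emptyB W := by
    rw [hW]
    refine smallPref_append hBsw.1 (hBsw.2 bsmall_emptyB) ?_
    refine smallPref_cons bsmall_emptyB hBc_small rfl ?_
    refine smallPref_cons hBc_small hBca_small rfl ?_
    refine smallPref_cons hBca_small hBa_small hrecvc ?_
    exact smallPref_cons hBa_small bsmall_emptyB hrecva (hBrest.2 bsmall_emptyB)
  have hexW : Exec M S (initConfig S) W
      ((fun i => if M.src a = i then x else cU.1 i), emptyB) :=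
    exec_iff.2 ⟨hwords, hrun⟩
  have hstable : Stable ((fun i => if M.src a = i then x else cU.1 i : ℕ → ℕ), emptyB) :=
    fun _ _ => rfl
  have hres := kSync_inr hsync hexW (boundedFifo_of_smallPref hsp) hstable
  have hsp' : sendProj W = w ++ (m ++ [c]) ++ [a] ++ rest := by simp [hW]
  rw [hsp'] at hres
  obtain ⟨paths', -⟩ := exec_iff.1 hres
  have := paths' (M.src a)
  simpa [initConfig] using this

/-- q-chain step: the endpoint `y` of the `dst a`-word of `U_{k+1}` is also an
endpoint of the `dst a`-word of `U_k`. -/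
lemma step_q (hsync : kSync M S 1) {w m rest : List ℕ} {a c : ℕ} {y : ℕ}
    (hpq : M.src a ≠ M.dst a)
    (hpc : M.src a ≠ M.src c)
    (hy : PathTo S (M.dst a) (S.init (M.dst a))
      (projPeer M (M.dst a) (syncOf (w ++ (m ++ [c]) ++ [a] ++ rest))) y)
    (hU : TraceOf M S (syncOf (w ++ m ++ [a] ++ c :: rest))) :
    PathTo S (M.dst a) (S.init (M.dst a))
      (projPeer M (M.dst a) (syncOf (w ++ m ++ [a] ++ c :: rest))) y := by
  classical
  obtain ⟨cU, hexU⟩ := hU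
  obtain ⟨pathsU, -⟩ := exec_iff.1 hexU
  set W : Trace := syncOf (w ++ m) ++
      (Act.send a :: Act.send c :: Act.recv c :: Act.recv a :: syncOf rest) with hW
  have hwordq : projPeer M (M.dst a) W =
      projPeer M (M.dst a) (syncOf (w ++ (m ++ [c]) ++ [a] ++ rest)) := by
    have hp : ¬ (M.src a = M.dst a) := hpq
    rw [word_U]
    simp [hW, projPeer_cons, peerOf, pw, hp, projPeer_syncOf_single]
    rfl
  have hwordo : ∀ i, M.dst a ≠ i → projPeer M i W =
      projPeer M i (syncOf (w ++ m ++ [a] ++ c :: rest)) := by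
    intro i hiq
    have hiq' : ¬ (M.dst a = i) := hiq
    rw [word_U, projPeer_syncOf_cons]
    simp [hW, projPeer_cons, peerOf, pw, hiq']
    rfl
  have hwords : ∀ i, PathTo S i (S.init i) (projPeer M i W)
      (if M.dst a = i then y else cU.1 i) := by
    intro i
    by_cases hiq : M.dst a = i
    · subst hiq
      rw [if_pos rfl, hwordq]
      exact hy
    · rw [if_neg hiq, hwordo i hiq]
      exact pathsU i
  set Ba : ℕ → ℕ → List ℕ := pushB M emptyB a with hBadef
  have hchc : ¬ (M.src a = M.src c ∧ M.dst a = M.dst c) := fun h => hpc h.1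
  have hchc' : ¬ (M.src c = M.src a ∧ M.dst c = M.dst a) := fun h => hpc h.1.symm
  have hBsw := execBuf_sync (M := M) (B := emptyB) (x := w ++ m) (fun b _ => rfl)
  have hBa_small : BSmall Ba := bsmall_push bsmall_emptyB rfl
  have hBac_small : BSmall (pushB M Ba c) := by
    refine bsmall_push hBa_small ?_
    simp [hBadef, pushB, emptyB, hchc']
  have hvalc : (pushB M Ba c) (M.src c) (M.dst c) = c :: [] := by
    simp [hBadef, pushB, emptyB, hchc']
  have hpop : popB M (pushB M Ba c) c [] = Ba := by
    funext k l
    by_cases hkl : k = M.src c ∧ l = M.dst c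
    · obtain ⟨rfl, rfl⟩ := hkl
      simp [popB, hBadef, pushB, emptyB, hchc']
    · simp [popB, hkl, hBadef, pushB, emptyB]
  have hrecvc : execBuf M (pushB M Ba c) [Act.recv c] = some Ba := by
    rw [execBuf_recv_eq _ _ _ hvalc, hpop]
  have hvala : Ba (M.src a) (M.dst a) = a :: [] := by
    simp [hBadef, pushB, emptyB]
  have hpopa : popB M Ba a [] = emptyB := by
    funext k l
    by_cases hka : k = M.src a ∧ l = M.dst a
    · obtain ⟨rfl, rfl⟩ := hka; simp [popB, emptyB]
    · simp [popB, hka, hBadef, pushB, emptyB]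
  have hrecva : execBuf M Ba [Act.recv a] = some emptyB := by
    rw [execBuf_recv_eq _ _ _ hvala, hpopa]
  have hBrest := execBuf_sync (M := M) (B := emptyB) (x := rest) (fun b _ => rfl)
  have hrun : execBuf M emptyB W = some emptyB := by
    rw [hW, execBuf_append, hBsw.1, Option.bind_some]
    show execBuf M (pushB M Ba c) (Act.recv c :: Act.recv a :: syncOf rest) = _
    rw [show (Act.recv c :: Act.recv a :: syncOf rest : Trace) =
        [Act.recv c] ++ ([Act.recv a] ++ syncOf rest) from rfl,
      execBuf_append, hrecvc, Option.bind_some, execBuf_append, hrecva,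
      Option.bind_some, hBrest.1]
  have hsp : SmallPref M emptyB W := by
    rw [hW]
    refine smallPref_append hBsw.1 (hBsw.2 bsmall_emptyB) ?_
    refine smallPref_cons bsmall_emptyB hBa_small rfl ?_
    refine smallPref_cons hBa_small hBac_small rfl ?_
    refine smallPref_cons hBac_small hBa_small hrecvc ?_
    exact smallPref_cons hBa_small bsmall_emptyB hrecva (hBrest.2 bsmall_emptyB)
  have hexW : Exec M S (initConfig S) W
      ((fun i => if M.dst a = i then y else cU.1 i), emptyB) :=
    exec_iff.2 ⟨hwords, hrun⟩
  have hstable : Stable ((fun i => if M.dst a = i then y else cU.1 i : ℕ → ℕ), emptyB) :=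
    fun _ _ => rfl
  have hres := kSync_inr hsync hexW (boundedFifo_of_smallPref hsp) hstable
  have hsp' : sendProj W = w ++ m ++ [a] ++ c :: rest := by simp [hW]
  rw [hsp'] at hres
  obtain ⟨paths', -⟩ := exec_iff.1 hres
  have := paths' (M.dst a)
  simpa [initConfig] using this

end AuxWitness3
/-- Lemma 4.5: a synchronous exchange !?a commutes with a block
of synchronous exchanges from other sources. -/
theorem sync_exchange_commutes (M : MessageSet) (S : System)
    (hM : M.WF) (hS : S.WF M) (hfin : S.FiniteDelta)
    (hsync : kSync M S 1)
    (τ : Trace) (hτ : Trk M S 0 τ)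
    (a : ℕ) (l : List ℕ) (haM : a ∈ M.msgs) (hmem : ∀ b ∈ l, b ∈ M.msgs)
    (hsrc : ∀ b ∈ l, M.src a ≠ M.src b)
    (h1 : Trk M S 0 (τ ++ syncOf [a]))
    (h2 : Trk M S 0 (τ ++ syncOf l)) :
    Trk M S 0 (τ ++ syncOf ([a] ++ l)) ∧
    Trk M S 0 (τ ++ syncOf (l ++ [a])) ∧
    SEquiv M S (τ ++ syncOf ([a] ++ l)) (τ ++ syncOf (l ++ [a])) := by
  classical
  obtain ⟨hτT, hτS⟩ := hτ
  obtain ⟨w, rfl⟩ := hτS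
  have hpq : M.src a ≠ M.dst a := (hM.2 a haM).1
  have h1' : TraceOf M S (syncOf (w ++ [a])) := by
    rw [syncOf_append]; exact h1.1
  have h2' : TraceOf M S (syncOf (w ++ l)) := by
    rw [syncOf_append]; exact h2.1
  -- Phase 1 : membership of U₀ = syncOf (w ++ [a] ++ l)
  have phase1 : ∀ r m, l = m ++ r → TraceOf M S (syncOf (w ++ [a] ++ m)) →
      TraceOf M S (syncOf (w ++ [a] ++ l)) := by
    intro r
    induction r with
    | nil =>
      intro m hm hT
      rw [hm, List.append_nil]
      exact hT
    | cons c r ih =>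
      intro m hm hT
      have hcl : c ∈ l := by rw [hm]; simp
      have hpc : M.src a ≠ M.src c := hsrc c hcl
      have hpm : ∀ b ∈ m, M.src a ≠ M.src b := fun b hb => hsrc b (by rw [hm]; simp [hb])
      have hH2 : TraceOf M S (syncOf (w ++ (m ++ c :: r))) := by rw [← hm]; exact h2'
      exact ih (m ++ [c]) (by rw [hm]; simp) (step_T hsync hpq hpc hpm hT hH2)
  have hU0 : TraceOf M S (syncOf (w ++ [a] ++ l)) :=
    phase1 l [] rfl (by simpa using h1')
  -- Phase 2 : membership of all the `U k`, in particular `U n`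
  have phase2 : ∀ r m, l = m ++ r → TraceOf M S (syncOf (w ++ m ++ [a] ++ r)) →
      TraceOf M S (syncOf (w ++ l ++ [a])) := by
    intro r
    induction r with
    | nil =>
      intro m hm hT
      rw [hm, List.append_nil]
      simpa using hT
    | cons c r ih =>
      intro m hm hT
      have hcl : c ∈ l := by rw [hm]; simp
      have hpc : M.src a ≠ M.src c := hsrc c hcl
      have hpr : ∀ b ∈ r, M.src a ≠ M.src b := fun b hb => hsrc b (by rw [hm]; simp [hb])
      have hH2 : TraceOf M S (syncOf (w ++ (m ++ c :: r))) := by rw [← hm]; exact h2'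
      exact ih (m ++ [c]) (by rw [hm]; simp)
        (step_mem hsync hpq hpc hpr hT hH2)
  have hUn : TraceOf M S (syncOf (w ++ l ++ [a])) :=
    phase2 l [] rfl (by simpa using hU0)
  have hU0' : TraceOf M S (syncOf (w ++ [a] ++ l)) := hU0
  obtain ⟨c0, hex0⟩ := hU0'
  obtain ⟨paths0, hbuf0⟩ := exec_iff.1 hex0
  obtain ⟨cn, hexn⟩ := hUn
  obtain ⟨pathsn, hbufn⟩ := exec_iff.1 hexn
  set x₀ : ℕ := c0.1 (M.src a) with hx₀
  set y : ℕ := cn.1 (M.dst a) with hy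
  -- Phase 3 : p-chain, upward
  have phase3 : ∀ r m, l = m ++ r →
      TraceOf M S (syncOf (w ++ m ++ [a] ++ r)) →
      PathTo S (M.src a) (S.init (M.src a))
        (projPeer M (M.src a) (syncOf (w ++ m ++ [a] ++ r))) x₀ →
      PathTo S (M.src a) (S.init (M.src a))
        (projPeer M (M.src a) (syncOf (w ++ l ++ [a]))) x₀ := by
    intro r
    induction r with
    | nil =>
      intro m hm _ hp
      rw [hm, List.append_nil]
      simpa using hp
    | cons c r ih =>
      intro m hm hT hp
      have hcl : c ∈ l := by rw [hm]; simp
      have hpc : M.src a ≠ M.src c := hsrc c hcl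
      have hpr : ∀ b ∈ r, M.src a ≠ M.src b := fun b hb => hsrc b (by rw [hm]; simp [hb])
      have hH2 : TraceOf M S (syncOf (w ++ (m ++ c :: r))) := by rw [← hm]; exact h2'
      have hU1 : TraceOf M S (syncOf (w ++ (m ++ [c]) ++ [a] ++ r)) :=
        step_mem hsync hpq hpc hpr hT hH2
      exact ih (m ++ [c]) (by rw [hm]; simp) hU1 (step_p hsync hpq hpc hp hU1)
  -- Phase 4 : q-chain, downward
  have phase4 : ∀ r m, l = m ++ r →
      TraceOf M S (syncOf (w ++ m ++ [a] ++ r)) →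
      PathTo S (M.dst a) (S.init (M.dst a))
        (projPeer M (M.dst a) (syncOf (w ++ m ++ [a] ++ r))) y := by
    intro r
    induction r with
    | nil =>
      intro m hm _
      have hml : m = l := by rw [hm]; simp
      subst hml
      simpa [initConfig] using pathsn (M.dst a)
    | cons c r ih =>
      intro m hm hT
      have hcl : c ∈ l := by rw [hm]; simp
      have hpc : M.src a ≠ M.src c := hsrc c hcl
      have hpr : ∀ b ∈ r, M.src a ≠ M.src b := fun b hb => hsrc b (by rw [hm]; simp [hb])
      have hH2 : TraceOf M S (syncOf (w ++ (m ++ c :: r))) := by rw [← hm]; exact h2'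
      have hU1 : TraceOf M S (syncOf (w ++ (m ++ [c]) ++ [a] ++ r)) :=
        step_mem hsync hpq hpc hpr hT hH2
      exact step_q hsync hpq hpc (ih (m ++ [c]) (by rw [hm]; simp) hU1) hT
  have hpx : PathTo S (M.src a) (S.init (M.src a))
      (projPeer M (M.src a) (syncOf (w ++ l ++ [a]))) x₀ :=
    phase3 l [] rfl (by simpa using hU0) (by simpa [initConfig] using paths0 (M.src a))
  have hqy : PathTo S (M.dst a) (S.init (M.dst a))
      (projPeer M (M.dst a) (syncOf (w ++ [a] ++ l))) y := by
    have := phase4 l [] rfl (by simpa using hU0)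
    simpa using this
  -- common configuration
  set d : Config :=
    (fun i => if M.src a = i then x₀ else if M.dst a = i then y else c0.1 i, emptyB)
    with hd
  have hword_indep : ∀ i, ¬ (M.src a = i) → ¬ (M.dst a = i) →
      projPeer M i (syncOf (w ++ [a] ++ l)) = projPeer M i (syncOf (w ++ l ++ [a])) := by
    intro i hip hiq
    rw [show w ++ l ++ [a] = (w ++ l) ++ [a] ++ ([] : List ℕ) by simp, word_U, word_U]
    simp [pw, hip, hiq]
  have hbufsync : ∀ x : List ℕ, execBuf M emptyB (syncOf x) = some emptyB :=
    fun x => (execBuf_sync (fun b _ => rfl)).1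
  have hexec1 : Exec M S (initConfig S) (syncOf (w ++ [a] ++ l)) d := by
    refine exec_iff.2 ⟨fun i => ?_, hbufsync _⟩
    by_cases hip : M.src a = i
    · subst hip
      rw [hd]
      simp only [if_pos rfl]
      exact paths0 (M.src a)
    · by_cases hiq : M.dst a = i
      · subst hiq
        rw [hd]
        simp only [if_neg hip, if_pos rfl]
        exact hqy
      · rw [hd]
        simp only [if_neg hip, if_neg hiq]
        exact paths0 i
  have hexec2 : Exec M S (initConfig S) (syncOf (w ++ l ++ [a])) d := by
    refine exec_iff.2 ⟨fun i => ?_, hbufsync _⟩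
    by_cases hip : M.src a = i
    · subst hip
      rw [hd]
      simp only [if_pos rfl]
      exact hpx
    · by_cases hiq : M.dst a = i
      · subst hiq
        rw [hd]
        simp only [if_neg hip, if_pos rfl]
        exact pathsn (M.dst a)
      · rw [hd]
        simp only [if_neg hip, if_neg hiq]
        rw [← hword_indep i hip hiq]
        exact paths0 i
  have hT1eq : syncOf w ++ syncOf ([a] ++ l) = syncOf (w ++ [a] ++ l) := by
    rw [← syncOf_append]; simp
  have hT2eq : syncOf w ++ syncOf (l ++ [a]) = syncOf (w ++ l ++ [a]) := by
    rw [← syncOf_append]; simp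
  exact ⟨⟨⟨d, by rw [hT1eq]; exact hexec1⟩, ⟨w ++ [a] ++ l, hT1eq⟩⟩,
    ⟨⟨d, by rw [hT2eq]; exact hexec2⟩, ⟨w ++ l ++ [a], hT2eq⟩⟩,
    ⟨d, by rw [hT1eq]; exact hexec1, by rw [hT2eq]; exact hexec2⟩⟩
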